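/- With â as above and c(t) = Σ_{n≥0}[1_{[t_n,s_n)}(t) + 6·1_{[s_n,t_{n+1})}(t)], the value Y²(t_n) := ∫_{t_n}^1 c(s)·â(s)·Y(s) ds equals −2^{-(2n+5)} for every n, where Y(s) := ∫_s^1 â(r) dr. -/

import Mathlib

/-!
Write `q = 2^{-(m+3)}`, so that the block `[t_m, t_{m+1})` has length `4q` and `s_m = t_m + 3q`.
Over a block `â` integrates to `3q - q = 2q`, whence `Y(t_m) = 4q` and `Y` is affine on each
quarter: `Y(s) = t_{m+1} - s` on `[t_m, s_m)` and `Y(s) = s - t_m - 2q` on `[s_m, t_{m+1})`.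
So `c â Y` integrates to `15q²/2 - 9q² = -3q²/2 = g_m - g_{m+1}` over the block, with
`g_m = -2q² = -2^{-(2m+5)}`. Both tails `∫_{t_n}^1` are computed by telescoping: when the block
integrals are `g_m - g_{m+1}` with `g_m → 0`, the difference `∫_{t_m}^1 - g_m` is constant in `m`
and tends to `0`, because `t_m → 1` and the primitive is continuous.
-/

open MeasureTheory Set

noncomputable def tn (n : ℕ) : ℝ := 1 - 1 / 2 ^ n
noncomputable def sn (n : ℕ) : ℝ := (tn n + 3 * tn (n + 1)) / 4
noncomputable def c (x : ℝ) : ℝ :=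
  ∑' n : ℕ, ((Ico (tn n) (sn n)).indicator (fun _ => (1 : ℝ)) x
    + 6 * (Ico (sn n) (tn (n + 1))).indicator (fun _ => (1 : ℝ)) x)
noncomputable def ahat (x : ℝ) : ℝ :=
  ∑' n : ℕ, ((Ico (tn n) (sn n)).indicator (fun _ => (1 : ℝ)) x
    - (Ico (sn n) (tn (n + 1))).indicator (fun _ => (1 : ℝ)) x)

open Filter Topology

lemma intervalIntegrable_of_abs_le {f : ℝ → ℝ} {C : ℝ} (hf : Measurable f)
    (hC : ∀ x, |f x| ≤ C) (a b : ℝ) : IntervalIntegrable f volume a b :=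
  intervalIntegrable_iff.2 <|
    Measure.integrableOn_of_bounded measure_Ioc_lt_top.ne hf.aestronglyMeasurable
      (ae_of_all _ fun x => (Real.norm_eq_abs _).le.trans (hC x))

lemma continuous_integral_left {f : ℝ → ℝ} (hf : ∀ a b, IntervalIntegrable f volume a b)
    (b : ℝ) : Continuous fun a => ∫ x in a..b, f x := by
  have h : (fun a => ∫ x in a..b, f x) = fun a => -∫ x in b..a, f x :=
    funext fun a => intervalIntegral.integral_symm b a
  exact h ▸ (intervalIntegral.continuous_primitive hf b).neg

lemma integral_eq_of_telescoping {f : ℝ → ℝ} {a : ℕ → ℝ} {b : ℝ} {g : ℕ → ℝ}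
    (hf : ∀ x y, IntervalIntegrable f volume x y) (ha : Tendsto a atTop (𝓝 b))
    (hg : Tendsto g atTop (𝓝 0)) (hstep : ∀ m, ∫ x in a m..a (m + 1), f x = g m - g (m + 1))
    (n : ℕ) : ∫ x in a n..b, f x = g n := by
  set u : ℕ → ℝ := fun m => (∫ x in a m..b, f x) - g m
  have hconst : ∀ m, u m = u 0 := by
    intro m
    induction m with
    | zero => rfl
    | succ m ih =>
      rw [← ih]
      simp only [u, ← intervalIntegral.integral_add_adjacent_intervals (hf (a m) (a (m + 1)))
        (hf _ b), hstep]
      ring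
  have hlim : Tendsto u atTop (𝓝 0) := by
    simpa using (((continuous_integral_left hf b).tendsto b).comp ha).sub hg
  have hu0 : u 0 = 0 :=
    tendsto_nhds_unique (tendsto_const_nhds.congr fun m => (hconst m).symm) hlim
  linarith [hconst n]

lemma integral_congr_Ioo {f g : ℝ → ℝ} {a b : ℝ} (hab : a ≤ b) (h : EqOn f g (Ioo a b)) :
    ∫ x in a..b, f x = ∫ x in a..b, g x :=
  intervalIntegral.integral_congr_ae <| (Measure.ae_ne volume b).mono fun x hxb hx => by
    rw [uIoc_of_le hab] at hx
    exact h ⟨hx.1, lt_of_le_of_ne hx.2 hxb⟩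

lemma integral_const_mul_sub_id (k C a b : ℝ) :
    ∫ x in a..b, k * (C - x) = k * (C * (b - a) - (b ^ 2 - a ^ 2) / 2) := by
  rw [intervalIntegral.integral_const_mul,
    intervalIntegral.integral_sub intervalIntegrable_const intervalIntegral.intervalIntegrable_id]
  simp only [intervalIntegral.integral_const, integral_id, smul_eq_mul]
  ring

noncomputable def quarter (m : ℕ) : ℝ := 1 / 2 ^ (m + 3)

lemma quarter_pos (m : ℕ) : 0 < quarter m := by unfold quarter; positivity

lemma quarter_succ (m : ℕ) : quarter (m + 1) = quarter m / 2 := by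
  unfold quarter; rw [pow_succ 2 (m + 3)]; ring

lemma sn_eq (m : ℕ) : sn m = tn m + 3 * quarter m := by
  unfold sn tn quarter; rw [pow_succ, pow_add]; ring

lemma tn_succ_eq (m : ℕ) : tn (m + 1) = tn m + 4 * quarter m := by
  unfold tn quarter; rw [pow_succ, pow_add]; ring

lemma tn_le_sn (m : ℕ) : tn m ≤ sn m := by
  linarith [sn_eq m, quarter_pos m]

lemma sn_le_tn_succ (m : ℕ) : sn m ≤ tn (m + 1) := by
  linarith [sn_eq m, tn_succ_eq m, quarter_pos m]

lemma tn_mono : Monotone tn :=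
  monotone_nat_of_le_succ fun m => (tn_le_sn m).trans (sn_le_tn_succ m)

lemma tendsto_quarter : Tendsto quarter atTop (𝓝 0) := by
  refine ((tendsto_pow_atTop_nhds_zero_of_lt_one (by norm_num : (0 : ℝ) ≤ 1 / 2)
    (by norm_num)).comp (tendsto_add_atTop_nat 3)).congr fun m => ?_
  simp [quarter]

lemma tendsto_tn : Tendsto tn atTop (𝓝 1) := by
  have h : tn = fun m => 1 - 8 * quarter m := by
    funext m; unfold tn quarter; rw [pow_add]; ring
  simpa [h] using (tendsto_quarter.const_mul 8).const_sub 1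

section BlockStep

variable (α β : ℝ)

noncomputable def blockStep (x : ℝ) : ℝ :=
  ∑' n : ℕ, (α * (Ico (tn n) (sn n)).indicator (fun _ => (1 : ℝ)) x
    + β * (Ico (sn n) (tn (n + 1))).indicator (fun _ => (1 : ℝ)) x)

variable {α β}

lemma blockStep_term_eq_zero {x : ℝ} {k : ℕ} (hx : x ∉ Ico (tn k) (tn (k + 1))) :
    α * (Ico (tn k) (sn k)).indicator (fun _ => (1 : ℝ)) x
      + β * (Ico (sn k) (tn (k + 1))).indicator (fun _ => (1 : ℝ)) x = 0 := by
  rw [indicator_of_notMem fun h => hx (Ico_subset_Ico_right (sn_le_tn_succ k) h),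
    indicator_of_notMem fun h => hx (Ico_subset_Ico_left (tn_le_sn k) h)]
  ring

lemma blockStep_of_mem_block {x : ℝ} {m : ℕ} (hx : x ∈ Ico (tn m) (tn (m + 1))) :
    blockStep α β x = α * (Ico (tn m) (sn m)).indicator (fun _ => (1 : ℝ)) x
      + β * (Ico (sn m) (tn (m + 1))).indicator (fun _ => (1 : ℝ)) x :=
  tsum_eq_single m fun _ hk => blockStep_term_eq_zero
    (disjoint_right.1 (tn_mono.pairwise_disjoint_on_Ico_succ hk) hx)

lemma blockStep_of_mem_left {x : ℝ} {m : ℕ} (hx : x ∈ Ico (tn m) (sn m)) :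
    blockStep α β x = α := by
  rw [blockStep_of_mem_block (Ico_subset_Ico_right (sn_le_tn_succ m) hx), indicator_of_mem hx,
    indicator_of_notMem fun h => (not_le.2 hx.2) h.1]
  ring

lemma blockStep_of_mem_right {x : ℝ} {m : ℕ} (hx : x ∈ Ico (sn m) (tn (m + 1))) :
    blockStep α β x = β := by
  rw [blockStep_of_mem_block (Ico_subset_Ico_left (tn_le_sn m) hx), indicator_of_mem hx,
    indicator_of_notMem fun h => (not_le.2 h.2) hx.1]
  ring

lemma blockStep_of_forall_notMem {x : ℝ} (hx : ∀ m, x ∉ Ico (tn m) (tn (m + 1))) :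
    blockStep α β x = 0 := by
  simp only [blockStep, blockStep_term_eq_zero (hx _), tsum_zero]

lemma abs_blockStep_le (x : ℝ) : |blockStep α β x| ≤ max |α| |β| := by
  by_cases hx : ∃ m, x ∈ Ico (tn m) (tn (m + 1))
  · obtain ⟨m, hm⟩ := hx
    rw [← Ico_union_Ico_eq_Ico (tn_le_sn m) (sn_le_tn_succ m)] at hm
    rcases hm with hm | hm
    · simp [blockStep_of_mem_left hm]
    · simp [blockStep_of_mem_right hm]
  · push Not at hx
    simp [blockStep_of_forall_notMem hx]

lemma measurable_blockStep : Measurable (blockStep α β) :=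
  Measurable.tsum fun _ =>
    (measurable_const.mul (measurable_const.indicator measurableSet_Ico)).add
      (measurable_const.mul (measurable_const.indicator measurableSet_Ico))

end BlockStep

lemma c_eq_blockStep : c = blockStep 1 6 := by
  funext x; simp only [c, blockStep, one_mul]

lemma ahat_eq_blockStep : ahat = blockStep 1 (-1) := by
  funext x; simp only [ahat, blockStep, one_mul, neg_one_mul, sub_eq_add_neg]

lemma c_of_mem_left {x : ℝ} {m : ℕ} (hx : x ∈ Ico (tn m) (sn m)) : c x = 1 := by
  rw [c_eq_blockStep, blockStep_of_mem_left hx]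

lemma c_of_mem_right {x : ℝ} {m : ℕ} (hx : x ∈ Ico (sn m) (tn (m + 1))) : c x = 6 := by
  rw [c_eq_blockStep, blockStep_of_mem_right hx]

lemma ahat_of_mem_left {x : ℝ} {m : ℕ} (hx : x ∈ Ico (tn m) (sn m)) : ahat x = 1 := by
  rw [ahat_eq_blockStep, blockStep_of_mem_left hx]

lemma ahat_of_mem_right {x : ℝ} {m : ℕ} (hx : x ∈ Ico (sn m) (tn (m + 1))) : ahat x = -1 := by
  rw [ahat_eq_blockStep, blockStep_of_mem_right hx]

lemma abs_c_le (x : ℝ) : |c x| ≤ 6 := by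
  simpa [c_eq_blockStep] using abs_blockStep_le (α := 1) (β := 6) x

lemma abs_ahat_le (x : ℝ) : |ahat x| ≤ 1 := by
  simpa [ahat_eq_blockStep] using abs_blockStep_le (α := 1) (β := -1) x

lemma intervalIntegrable_ahat (a b : ℝ) : IntervalIntegrable ahat volume a b :=
  intervalIntegrable_of_abs_le (ahat_eq_blockStep ▸ measurable_blockStep) abs_ahat_le a b

lemma intervalIntegrable_c_mul_ahat_mul_primitive (a b : ℝ) :
    IntervalIntegrable (fun s => c s * ahat s * ∫ r in s..1, ahat r) volume a b := by
  have hbound (x : ℝ) : |c x * ahat x| ≤ 6 * 1 := by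
    rw [abs_mul]
    exact mul_le_mul (abs_c_le x) (abs_ahat_le x) (abs_nonneg _) (by norm_num)
  have hmeas : Measurable fun x => c x * ahat x :=
    (c_eq_blockStep ▸ measurable_blockStep).mul (ahat_eq_blockStep ▸ measurable_blockStep)
  exact (intervalIntegrable_of_abs_le hmeas hbound a b).mul_continuousOn
    (continuous_integral_left intervalIntegrable_ahat 1).continuousOn

lemma integral_ahat_left {a b : ℝ} {m : ℕ} (ha : tn m ≤ a) (hab : a ≤ b) (hb : b ≤ sn m) :
    ∫ x in a..b, ahat x = b - a := by
  rw [integral_congr_Ioo hab (g := fun _ => 1)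
    fun x hx => ahat_of_mem_left ⟨ha.trans hx.1.le, hx.2.trans_le hb⟩]
  simp

lemma integral_ahat_right {a b : ℝ} {m : ℕ} (ha : sn m ≤ a) (hab : a ≤ b)
    (hb : b ≤ tn (m + 1)) : ∫ x in a..b, ahat x = -(b - a) := by
  rw [integral_congr_Ioo hab (g := fun _ => -1)
    fun x hx => ahat_of_mem_right ⟨ha.trans hx.1.le, hx.2.trans_le hb⟩]
  simp

lemma integral_ahat_block (m : ℕ) : ∫ x in tn m..tn (m + 1), ahat x = 2 * quarter m := by
  rw [← intervalIntegral.integral_add_adjacent_intervals (b := sn m) (intervalIntegrable_ahat _ _)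
    (intervalIntegrable_ahat _ _), integral_ahat_left le_rfl (tn_le_sn m) le_rfl,
    integral_ahat_right le_rfl (sn_le_tn_succ m) le_rfl, sn_eq, tn_succ_eq]
  ring

lemma integral_ahat_tn (n : ℕ) : ∫ x in tn n..1, ahat x = 4 * quarter n :=
  integral_eq_of_telescoping intervalIntegrable_ahat tendsto_tn
    (by simpa using tendsto_quarter.const_mul 4)
    (fun m => by rw [integral_ahat_block, quarter_succ]; ring) n

lemma integral_ahat_of_mem_left {s : ℝ} {m : ℕ} (hs : s ∈ Ico (tn m) (sn m)) :
    ∫ r in s..1, ahat r = tn (m + 1) - s := by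
  rw [← intervalIntegral.integral_add_adjacent_intervals (b := sn m) (intervalIntegrable_ahat _ _)
      (intervalIntegrable_ahat _ _),
    ← intervalIntegral.integral_add_adjacent_intervals (a := sn m) (b := tn (m + 1))
      (intervalIntegrable_ahat _ _) (intervalIntegrable_ahat _ _),
    integral_ahat_left hs.1 hs.2.le le_rfl, integral_ahat_right le_rfl (sn_le_tn_succ m) le_rfl,
    integral_ahat_tn, quarter_succ, tn_succ_eq, sn_eq]
  ring

lemma integral_ahat_of_mem_right {s : ℝ} {m : ℕ} (hs : s ∈ Ico (sn m) (tn (m + 1))) :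
    ∫ r in s..1, ahat r = s - (tn m + 2 * quarter m) := by
  rw [← intervalIntegral.integral_add_adjacent_intervals (b := tn (m + 1))
      (intervalIntegrable_ahat _ _) (intervalIntegrable_ahat _ _),
    integral_ahat_right hs.1 hs.2.le le_rfl, integral_ahat_tn, quarter_succ, tn_succ_eq]
  ring

lemma integral_c_mul_ahat_mul_primitive_block (m : ℕ) :
    ∫ s in tn m..tn (m + 1), c s * ahat s * ∫ r in s..1, ahat r = -(3 / 2) * quarter m ^ 2 := by
  have hleft : EqOn (fun s => c s * ahat s * ∫ r in s..1, ahat r)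
      (fun s => 1 * (tn (m + 1) - s)) (Ioo (tn m) (sn m)) := fun s hs => by
    have hs' : s ∈ Ico (tn m) (sn m) := Ioo_subset_Ico_self hs
    simp only [c_of_mem_left hs', ahat_of_mem_left hs', integral_ahat_of_mem_left hs', one_mul]
  have hright : EqOn (fun s => c s * ahat s * ∫ r in s..1, ahat r)
      (fun s => 6 * ((tn m + 2 * quarter m) - s)) (Ioo (sn m) (tn (m + 1))) := fun s hs => by
    have hs' : s ∈ Ico (sn m) (tn (m + 1)) := Ioo_subset_Ico_self hs
    simp only [c_of_mem_right hs', ahat_of_mem_right hs', integral_ahat_of_mem_right hs']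
    ring
  rw [← intervalIntegral.integral_add_adjacent_intervals (b := sn m)
      (intervalIntegrable_c_mul_ahat_mul_primitive _ _)
      (intervalIntegrable_c_mul_ahat_mul_primitive _ _),
    integral_congr_Ioo (tn_le_sn m) hleft, integral_congr_Ioo (sn_le_tn_succ m) hright,
    integral_const_mul_sub_id, integral_const_mul_sub_id, tn_succ_eq, sn_eq]
  ring

lemma one_div_two_pow_eq_quarter_sq (m : ℕ) : 1 / 2 ^ (2 * m + 5) = 2 * quarter m ^ 2 := by
  rw [quarter, div_pow, one_pow, ← pow_mul, show (m + 3) * 2 = 2 * m + 5 + 1 by ring, pow_succ]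
  ring

theorem stmt7 (n : ℕ) :
    (∫ s in (tn n)..1, c s * ahat s * ∫ r in s..1, ahat r) = -(1 / 2 ^ (2 * n + 5)) := by
  refine integral_eq_of_telescoping (g := fun m => -(1 / 2 ^ (2 * m + 5)))
    intervalIntegrable_c_mul_ahat_mul_primitive tendsto_tn ?_ (fun m => ?_) n
  · have h := ((tendsto_quarter.pow 2).const_mul 2).neg
    rw [zero_pow two_ne_zero, mul_zero, neg_zero] at h
    simpa only [one_div_two_pow_eq_quarter_sq] using h
  · rw [integral_c_mul_ahat_mul_primitive_block, one_div_two_pow_eq_quarter_sq,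
      one_div_two_pow_eq_quarter_sq, quarter_succ]
    ring
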